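/- Let (K, ∂) be a differential field of characteristic zero, let u ∈ K with u' := ∂u ≠ 0, and let δ = (∂u)⁻¹·∂ be the derivation d/du, so δx = ∂x/∂u. Then for any a ∈ K with δa ≠ 0, one has χ_∂(a) = χ_δ(a)·(∂u)² + S_∂(u), where χ_δ(x) = S_δ(x) + R(x)(δx)² and R(y) = (y² − 1968y + 2654208)/(2y²(y−1728)²). In particular, if χ_∂(a) = S_∂(u), then χ_δ(a) = 0. -/

import Mathlib

def schwarzianD {K : Type*} [Field K] (d : K → K) (x : K) : K :=
  d (d (d x) / d x) - (d (d x) / d x) ^ 2 / 2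

def RjD {K : Type*} [Field K] (y : K) : K :=
  (y ^ 2 - 1968 * y + 2654208) / (2 * y ^ 2 * (y - 1728) ^ 2)

def chiD {K : Type*} [Field K] (d : K → K) (x : K) : K :=
  schwarzianD d x + RjD x * (d x) ^ 2

lemma schwarzian_chain {K : Type*} [Field K] [CharZero K]
    (der : Derivation ℚ K K) (u : K) (hu : der u ≠ 0) (a : K) (ha : der a ≠ 0) :
    schwarzianD (⇑der) a =
      schwarzianD (fun x => (der u)⁻¹ * der x) a * (der u) ^ 2 + schwarzianD (⇑der) u := by
  have c1 : ((der u)⁻¹ * der ((der u)⁻¹ * der a)) / ((der u)⁻¹ * der a)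
      = (der (der a) * der u - der a * der (der u)) / (der a * (der u) ^ 2) := by
    simp only [Derivation.leibniz, Derivation.leibniz_inv, smul_eq_mul]
    field_simp
    first
      | ring1
      | (rw [div_eq_iff (by simp [hu, ha])]; ring)
      | (rw [eq_div_iff (by simp [hu, ha])]; ring)
  have c2 : (der u)⁻¹ * der ((der (der a) * der u - der a * der (der u)) / (der a * (der u) ^ 2))
      = ((der (der (der a)) * der u - der a * der (der (der u))) * der a * der u
          - (der (der a) * der u - der a * der (der u))
            * (der (der a) * der u + 2 * der a * der (der u)))
        / ((der a) ^ 2 * (der u) ^ 4) := by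
    simp only [Derivation.leibniz_div, Derivation.leibniz, Derivation.leibniz_pow, map_sub,
      smul_eq_mul]
    field_simp
    first
      | ring1
      | (rw [div_eq_iff (by simp [hu, ha])]; ring)
      | (rw [eq_div_iff (by simp [hu, ha])]; ring)
  have c3 : der (der (der a) / der a)
      = (der (der (der a)) * der a - der (der a) ^ 2) / (der a) ^ 2 := by
    simp only [Derivation.leibniz_div, smul_eq_mul]
    field_simp
  have c4 : der (der (der u) / der u)
      = (der (der (der u)) * der u - der (der u) ^ 2) / (der u) ^ 2 := by
    simp only [Derivation.leibniz_div, smul_eq_mul]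
    field_simp
  simp only [schwarzianD]
  rw [c3, c4, c1, c2]
  field_simp
  ring

/-- Change-of-variables identity: if `δ = (∂u)⁻¹·∂` is differentiation with respect to `u`,
then `χ_∂(a) = χ_δ(a)·(∂u)² + S_∂(u)`; in particular if `χ_∂(a) = S_∂(u)` then `χ_δ(a) = 0`. -/
theorem chi_change_of_variables {K : Type*} [Field K] [CharZero K]
    (der : Derivation ℚ K K) (u : K) (hu : der u ≠ 0) (a : K)
    (δ : K → K) (hδ : δ = fun x => (der u)⁻¹ * der x) (ha : δ a ≠ 0) :
    chiD (⇑der) a = chiD δ a * (der u) ^ 2 + schwarzianD (⇑der) u ∧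
      (schwarzianD (⇑der) u = chiD (⇑der) a → chiD δ a = 0) := by
  subst hδ
  have ha' : der a ≠ 0 := by
    simpa [mul_eq_zero, inv_eq_zero, hu] using ha
  have key : chiD (⇑der) a =
      chiD (fun x => (der u)⁻¹ * der x) a * (der u) ^ 2 + schwarzianD (⇑der) u := by
    simp only [chiD]
    rw [schwarzian_chain der u hu a ha']
    field_simp
    first
      | ring1
      | (rw [div_eq_iff (by simp [hu, ha])]; ring)
      | (rw [eq_div_iff (by simp [hu, ha])]; ring)
  refine ⟨key, fun h => ?_⟩
  rw [h] at key
  have h0 : chiD (fun x => (der u)⁻¹ * der x) a * (der u) ^ 2 = 0 :=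
    (right_eq_add.mp key)
  exact (mul_eq_zero.mp h0).resolve_right (pow_ne_zero 2 hu)
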